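/- arXiv:1611.07992 — 4 statements merged into one kernel-verified Lean document; each statement's English description precedes it below -/
import Mathlib

section
/- Suppose for every binary x ∈ {0,1}^n and every a ∈ U(x) (where U(x) = {a ∈ ℝ^m : a_i ≥ x_{i1}, a_i ≥ x_{i2}, a_i ≥ 1 − x_{i3}, a_i ≤ 1 ∀i}) one has Σᵢ aᵢ ≥ m only when a = (1,…,1), and suppose there exists x ∈ {0,1}^n such that every a ∈ U(x) satisfies Σᵢ aᵢ ≥ m. Then x satisfies the 3-SAT instance, i.e., for every clause i, at least one of x_{i1} = 1, x_{i2} = 1, or x_{i3} = 0 holds. -/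
/-!
For `x ∈ [0,1]ⁿ`, the vector equal to `1` except for the value
`cᵢ = max (x (i1 i), x (i2 i), 1 - x (i3 i))` at clause `i` lies in `U(x)` and has coordinate sum
`m - 1 + cᵢ`, so `Σ aᵢ ≥ m` on `U(x)` forces `cᵢ ≥ 1` for every clause. For binary `x` this says
that some literal of each clause is true.
-/

theorem sum_update_const_one {ι : Type*} [Fintype ι] [DecidableEq ι] (i : ι) (c : ℝ) :
    ∑ j, Function.update (fun _ => (1 : ℝ)) i c j = Fintype.card ι - 1 + c := by
  rw [Finset.sum_update_of_mem (Finset.mem_univ i), Finset.sum_const, nsmul_one,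
    Finset.card_sdiff_of_subset (by simp), Finset.card_univ, Finset.card_singleton,
    Nat.cast_sub (Fintype.card_pos_iff.mpr ⟨i⟩)]
  ring

theorem one_le_clause_value {n m : ℕ} {i1 i2 i3 : Fin m → Fin n} {x : Fin n → ℝ}
    (hx : ∀ j, 0 ≤ x j ∧ x j ≤ 1)
    (hall : ∀ a : Fin m → ℝ,
        (∀ i, x (i1 i) ≤ a i ∧ x (i2 i) ≤ a i ∧ 1 - x (i3 i) ≤ a i ∧ a i ≤ 1) →
        (m : ℝ) ≤ ∑ i, a i)
    (i : Fin m) : 1 ≤ max (max (x (i1 i)) (x (i2 i))) (1 - x (i3 i)) := by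
  set c := max (max (x (i1 i)) (x (i2 i))) (1 - x (i3 i))
  set a := Function.update (fun _ => (1 : ℝ)) i c
  have ha : ∀ k, x (i1 k) ≤ a k ∧ x (i2 k) ≤ a k ∧ 1 - x (i3 k) ≤ a k ∧ a k ≤ 1 := by
    intro k
    rcases eq_or_ne k i with rfl | hk
    · rw [show a k = c from Function.update_self _ _ _]
      exact ⟨le_max_of_le_left (le_max_left _ _), le_max_of_le_left (le_max_right _ _),
        le_max_right _ _, max_le (max_le (hx _).2 (hx _).2) (by linarith [(hx (i3 k)).1])⟩
    · rw [show a k = 1 from Function.update_of_ne hk _ _]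
      exact ⟨(hx _).2, (hx _).2, by linarith [(hx (i3 k)).1], le_rfl⟩
  have hsum := hall a ha
  rw [sum_update_const_one, Fintype.card_fin] at hsum
  linarith

theorem literal_true_of_one_le_max {p q r : ℝ} (hp : p = 0 ∨ p = 1) (hq : q = 0 ∨ q = 1)
    (hr : r = 0 ∨ r = 1) (h : 1 ≤ max (max p q) (1 - r)) : p = 1 ∨ q = 1 ∨ r = 0 := by
  rcases hp with rfl | rfl <;> rcases hq with rfl | rfl <;> rcases hr with rfl | rfl <;>
    (revert h; norm_num)

theorem stmt_2_general (n m : ℕ) (i1 i2 i3 : Fin m → Fin n)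
    (x : Fin n → ℝ) (hx : ∀ j, x j = 0 ∨ x j = 1)
    (hall : ∀ a : Fin m → ℝ,
        (∀ i, x (i1 i) ≤ a i ∧ x (i2 i) ≤ a i ∧ 1 - x (i3 i) ≤ a i ∧ a i ≤ 1) →
        (m : ℝ) ≤ ∑ i, a i) :
    ∀ i, x (i1 i) = 1 ∨ x (i2 i) = 1 ∨ x (i3 i) = 0 := by
  have hx01 : ∀ j, 0 ≤ x j ∧ x j ≤ 1 := fun j => by rcases hx j with h | h <;> norm_num [h]
  exact fun i => literal_true_of_one_le_max (hx _) (hx _) (hx _) (one_le_clause_value hx01 hall i)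

/-- if Σ aᵢ ≥ m over U(x') forces a = 1 for every binary x', and some
binary x is such that every a ∈ U(x) satisfies Σ aᵢ ≥ m, then x satisfies the
3-SAT instance. -/
theorem stmt_2 (n m : ℕ) (i1 i2 i3 : Fin m → Fin n)
    (hforce : ∀ x : Fin n → ℝ, (∀ j, x j = 0 ∨ x j = 1) →
      ∀ a : Fin m → ℝ,
        (∀ i, x (i1 i) ≤ a i ∧ x (i2 i) ≤ a i ∧ 1 - x (i3 i) ≤ a i ∧ a i ≤ 1) →
        (m : ℝ) ≤ ∑ i, a i → a = fun _ => (1 : ℝ))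
    (x : Fin n → ℝ) (hx : ∀ j, x j = 0 ∨ x j = 1)
    (hall : ∀ a : Fin m → ℝ,
        (∀ i, x (i1 i) ≤ a i ∧ x (i2 i) ≤ a i ∧ 1 - x (i3 i) ≤ a i ∧ a i ≤ 1) →
        (m : ℝ) ≤ ∑ i, a i) :
    ∀ i, x (i1 i) = 1 ∨ x (i2 i) = 1 ∨ x (i3 i) = 0 :=
  stmt_2_general n m i1 i2 i3 x hx hall
end

section
/- Let D ∈ ℝ^{m×n}, d ∈ ℝ^m, v, w ∈ ℝ^n with v, w ≥ 0, W = diag(w), x ∈ {0,1}^n, y ∈ ℝ^n, and let π̄ ∈ ℝ^n be a componentwise upper bound on the optimal dual variable of the constraint ξ ≤ v + W(1−x) in problem (P). If the set U(x) = {ξ : Dξ ≤ d, 0 ≤ ξ ≤ v + W(1−x)} is nonempty and LP strong duality holds for both problems, then h(x,y) := max{yᵀξ : ξ ∈ U(x)} equals h̄(x,y) := max{(y − Π̄x)ᵀξ + yᵀζ : Dξ + Dζ ≤ d, 0 ≤ ξ ≤ w, 0 ≤ ζ ≤ v}, where Π̄ = diag(π̄). -/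
/-!
Splitting a point `ξ ∈ U(x)` as `ξ = (ξ - min ξ v) + min ξ v` gives a feasible point of the
lifted problem with the same value: where `x j = 1` the cap forces `ξ j ≤ v j`, so the
penalised part `ξ j - min (ξ j) (v j)` vanishes. Hence `h ≤ h̄`. Conversely, any optimal dual
solution `(π, q)` of `(P)` with `π ≤ π̄` is dual feasible for the lifted problem, so weak
duality gives `h̄ ≤ h`.
-/

open Matrix

section Pointwise

variable {a p x y ξ ζ π v w : ℝ}

lemma mem_Icc_of_eq_zero_or_eq_one (hx : x = 0 ∨ x = 1) : x ∈ Set.Icc (0 : ℝ) 1 := by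
  rcases hx with rfl | rfl <;> norm_num

lemma sub_min_le_of_le_add (hw : 0 ≤ w) (h : ξ ≤ v + w) : ξ - min ξ v ≤ w := by
  rcases min_cases ξ v with ⟨hm, _⟩ | ⟨hm, _⟩ <;> rw [hm] <;> linarith

lemma mul_one_sub_le_self (hw : 0 ≤ w) (hx : 0 ≤ x) : w * (1 - x) ≤ w := by
  nlinarith

lemma split_objective_eq (hx : x = 0 ∨ x = 1) (hξ : ξ ≤ v + w * (1 - x)) :
    (y - p * x) * (ξ - min ξ v) + y * min ξ v = y * ξ := by
  rcases hx with rfl | rfl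
  · ring
  · rw [min_eq_left (by simpa using hξ)]
    ring

lemma penalised_mul_le (hy : y ≤ π + a) (hπ : 0 ≤ π) (hπp : π ≤ p) (hx : x ∈ Set.Icc 0 1)
    (hξ0 : 0 ≤ ξ) (hξw : ξ ≤ w) :
    (y - p * x) * ξ ≤ π * (w * (1 - x)) + a * ξ := by
  have hπx : π - p * x ≤ π * (1 - x) := by nlinarith [hx.1]
  calc (y - p * x) * ξ ≤ (π - p * x) * ξ + a * ξ := by nlinarith
    _ ≤ π * (1 - x) * ξ + a * ξ := by gcongr
    _ ≤ π * (w * (1 - x)) + a * ξ := by nlinarith [mul_nonneg hπ (sub_nonneg.2 hx.2)]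

lemma mul_le_of_le_add (hy : y ≤ π + a) (hπ : 0 ≤ π) (hζ0 : 0 ≤ ζ) (hζv : ζ ≤ v) :
    y * ζ ≤ π * v + a * ζ := by
  nlinarith [mul_le_mul_of_nonneg_left hζv hπ]

end Pointwise

section Lifted

variable {ι κ : Type*} [Fintype ι] {D : Matrix κ ι ℝ} {d : κ → ℝ}
  {v w x y πbar ξ ζ : ι → ℝ}

lemma exists_lifted_of_feasible (hv : 0 ≤ v) (hw : 0 ≤ w) (hx : ∀ j, x j = 0 ∨ x j = 1)
    (hDξ : D *ᵥ ξ ≤ d) (hξ0 : 0 ≤ ξ) (hξ : ∀ j, ξ j ≤ v j + w j * (1 - x j)) :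
    ∃ ξ' ζ : ι → ℝ, D *ᵥ ξ' + D *ᵥ ζ ≤ d ∧ 0 ≤ ξ' ∧ 0 ≤ ζ ∧ (∀ j, ξ' j ≤ w j) ∧
      (∀ j, ζ j ≤ v j) ∧ y ⬝ᵥ ξ = (fun j => y j - πbar j * x j) ⬝ᵥ ξ' + y ⬝ᵥ ζ := by
  refine ⟨fun j => ξ j - min (ξ j) (v j), fun j => min (ξ j) (v j), ?_,
    fun j => sub_nonneg.2 (min_le_left _ _), fun j => le_min (hξ0 j) (hv j), fun j => ?_,
    fun j => min_le_right _ _, ?_⟩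
  · have hsplit : (fun j => ξ j - min (ξ j) (v j)) + (fun j => min (ξ j) (v j)) = ξ :=
      funext fun j => sub_add_cancel _ _
    rwa [← mulVec_add, hsplit]
  · have hcap := mul_one_sub_le_self (hw j) (mem_Icc_of_eq_zero_or_eq_one (hx j)).1
    exact sub_min_le_of_le_add (hw j) ((hξ j).trans (by linarith))
  · simp only [dotProduct, ← Finset.sum_add_distrib]
    exact Finset.sum_congr rfl fun j _ => (split_objective_eq (hx j) (hξ j)).symm

lemma lifted_objective_le_dual [Fintype κ] (hx : ∀ j, x j ∈ Set.Icc 0 1) {π : ι → ℝ}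
    {q : κ → ℝ} (hπ : 0 ≤ π) (hq : 0 ≤ q) (hdual : ∀ j, y j ≤ π j + vecMul q D j)
    (hπbar : ∀ j, π j ≤ πbar j)
    (hD : D *ᵥ ξ + D *ᵥ ζ ≤ d) (hξ0 : 0 ≤ ξ) (hζ0 : 0 ≤ ζ) (hξw : ∀ j, ξ j ≤ w j)
    (hζv : ∀ j, ζ j ≤ v j) :
    (fun j => y j - πbar j * x j) ⬝ᵥ ξ + y ⬝ᵥ ζ
      ≤ q ⬝ᵥ d + π ⬝ᵥ v + ∑ j, π j * (w j * (1 - x j)) := by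
  have hξ : (fun j => y j - πbar j * x j) ⬝ᵥ ξ
      ≤ ∑ j, π j * (w j * (1 - x j)) + vecMul q D ⬝ᵥ ξ := by
    simp only [dotProduct, ← Finset.sum_add_distrib]
    exact Finset.sum_le_sum fun j _ => penalised_mul_le (hdual j) (hπ j) (hπbar j) (hx j)
      (hξ0 j) (hξw j)
  have hζ : y ⬝ᵥ ζ ≤ π ⬝ᵥ v + vecMul q D ⬝ᵥ ζ := by
    simp only [dotProduct, ← Finset.sum_add_distrib]
    exact Finset.sum_le_sum fun j _ => mul_le_of_le_add (hdual j) (hπ j) (hζ0 j) (hζv j)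
  have hqD : vecMul q D ⬝ᵥ ξ + vecMul q D ⬝ᵥ ζ ≤ q ⬝ᵥ d := by
    rw [← dotProduct_mulVec, ← dotProduct_mulVec, ← dotProduct_add]
    exact Finset.sum_le_sum fun i _ => mul_le_mul_of_nonneg_left (hD i) (hq i)
  linarith

end Lifted

theorem stmt_4_general {m n : ℕ}
    (D : Matrix (Fin m) (Fin n) ℝ) (d : Fin m → ℝ) (v w : Fin n → ℝ)
    (x y πbar : Fin n → ℝ)
    (hv : 0 ≤ v) (hw : 0 ≤ w) (hx : ∀ j, x j = 0 ∨ x j = 1)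
    (h hbar : ℝ)
    (hP : IsGreatest {val | ∃ ξ : Fin n → ℝ, D.mulVec ξ ≤ d ∧ 0 ≤ ξ ∧
        (∀ j, ξ j ≤ v j + w j * (1 - x j)) ∧ val = y ⬝ᵥ ξ} h)
    (hPbar : IsGreatest {val | ∃ ξ ζ : Fin n → ℝ,
        D.mulVec ξ + D.mulVec ζ ≤ d ∧ 0 ≤ ξ ∧ 0 ≤ ζ ∧
        (∀ j, ξ j ≤ w j) ∧ (∀ j, ζ j ≤ v j) ∧
        val = (fun j => y j - πbar j * x j) ⬝ᵥ ξ + y ⬝ᵥ ζ} hbar)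
    (hdual : ∃ (π : Fin n → ℝ) (q : Fin m → ℝ), 0 ≤ π ∧ 0 ≤ q ∧
        (∀ j, y j ≤ π j + Matrix.vecMul q D j) ∧
        q ⬝ᵥ d + π ⬝ᵥ v + (∑ j, π j * (w j * (1 - x j))) = h ∧
        ∀ j, π j ≤ πbar j) :
    h = hbar := by
  apply le_antisymm
  · obtain ⟨ξ, hDξ, hξ0, hξ, rfl⟩ := hP.1
    obtain ⟨ξ', ζ, hlifted⟩ :=
      exists_lifted_of_feasible (y := y) (πbar := πbar) hv hw hx hDξ hξ0 hξ
    exact hPbar.2 ⟨ξ', ζ, hlifted⟩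
  · obtain ⟨ξ, ζ, hD, hξ0, hζ0, hξw, hζv, rfl⟩ := hPbar.1
    obtain ⟨π, q, hπ, hq, hy, rfl, hπbar⟩ := hdual
    exact lifted_objective_le_dual (fun j => mem_Icc_of_eq_zero_or_eq_one (hx j)) hπ hq hy hπbar
      hD hξ0 hζ0 hξw hζv

/-- Proposition 1: with v, w ≥ 0, binary x, nonempty U(x), and LP
strong duality for both problems (encoded by attainment of the primal maxima and by
an optimal dual solution (π, q) of (P) whose multiplier π of the upper-bound
constraint is dominated by π̄), the worst-case values h(x,y) and h̄(x,y) coincide. -/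
theorem stmt_4 {m n : ℕ}
    (D : Matrix (Fin m) (Fin n) ℝ) (d : Fin m → ℝ) (v w : Fin n → ℝ)
    (x y πbar : Fin n → ℝ)
    (hv : 0 ≤ v) (hw : 0 ≤ w) (hx : ∀ j, x j = 0 ∨ x j = 1)
    (hne : ∃ ξ : Fin n → ℝ, D.mulVec ξ ≤ d ∧ 0 ≤ ξ ∧
        ∀ j, ξ j ≤ v j + w j * (1 - x j))
    (h hbar : ℝ)
    (hP : IsGreatest {val | ∃ ξ : Fin n → ℝ, D.mulVec ξ ≤ d ∧ 0 ≤ ξ ∧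
        (∀ j, ξ j ≤ v j + w j * (1 - x j)) ∧ val = y ⬝ᵥ ξ} h)
    (hPbar : IsGreatest {val | ∃ ξ ζ : Fin n → ℝ,
        D.mulVec ξ + D.mulVec ζ ≤ d ∧ 0 ≤ ξ ∧ 0 ≤ ζ ∧
        (∀ j, ξ j ≤ w j) ∧ (∀ j, ζ j ≤ v j) ∧
        val = (fun j => y j - πbar j * x j) ⬝ᵥ ξ + y ⬝ᵥ ζ} hbar)
    (hdual : ∃ (π : Fin n → ℝ) (q : Fin m → ℝ), 0 ≤ π ∧ 0 ≤ q ∧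
        (∀ j, y j ≤ π j + Matrix.vecMul q D j) ∧
        q ⬝ᵥ d + π ⬝ᵥ v + (∑ j, π j * (w j * (1 - x j))) = h ∧
        ∀ j, π j ≤ πbar j) :
    h = hbar :=
  stmt_4_general D d v w x y πbar hv hw hx h hbar hP hPbar hdual
end

section
/- Consider the dual LPs: (D) minimize qᵀd + πᵀv + πᵀW(1−x) subject to π + Dᵀq ≥ y, π, q ≥ 0; and (D') minimize tᵀd + rᵀw + sᵀv subject to s + Dᵀt ≥ y, r + Dᵀt ≥ y − Π̄x, r, s, t ≥ 0, where Π̄ = diag(π̄) with π̄ ≥ π* componentwise for the optimal π* of (D). If (π, q) is feasible for (D) and x ∈ {0,1}^n, then (r, s, t) = (π − diag(π)x, π, q) is feasible for (D') with objective value at most that of (π, q) in (D); hence opt(D') ≤ opt(D). -/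
open Matrix

section OrderedRing

variable {α : Type*} [Ring α] [PartialOrder α] [IsOrderedRing α]

lemma sub_mul_self_nonneg {a t : α} (ha : 0 ≤ a) (ht : t ≤ 1) : 0 ≤ a - a * t := by
  rw [← mul_one_sub]
  exact mul_nonneg ha (sub_nonneg.2 ht)

lemma sub_mul_le_sub_mul_self_add {y a b c t : α} (hy : y ≤ a + c) (hab : a ≤ b) (ht : 0 ≤ t) :
    y - b * t ≤ a - a * t + c :=
  calc y - b * t ≤ a + c - a * t := sub_le_sub hy (mul_le_mul_of_nonneg_right hab ht)
    _ = a - a * t + c := by abel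

end OrderedRing

theorem stmt_5_general {m n : ℕ}
    (D : Matrix (Fin m) (Fin n) ℝ) (d : Fin m → ℝ)
    (v w y πbar x : Fin n → ℝ)
    (hx : ∀ j, x j = 0 ∨ x j = 1)
    (π : Fin n → ℝ) (q : Fin m → ℝ)
    (hπ : 0 ≤ π)
    (hfeas : ∀ j, y j ≤ π j + Matrix.vecMul q D j)
    (hbound : ∀ j, π j ≤ πbar j) :
    (0 ≤ fun j => π j - π j * x j) ∧
    (∀ j, y j ≤ π j + Matrix.vecMul q D j) ∧
    (∀ j, y j - πbar j * x j ≤ (π j - π j * x j) + Matrix.vecMul q D j) ∧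
    q ⬝ᵥ d + (∑ j, (π j - π j * x j) * w j) + π ⬝ᵥ v
      ≤ q ⬝ᵥ d + π ⬝ᵥ v + ∑ j, π j * (w j * (1 - x j)) := by
  have hx_mem : ∀ j, 0 ≤ x j ∧ x j ≤ 1 := fun j => by rcases hx j with h | h <;> norm_num [h]
  have hobj : ∑ j, (π j - π j * x j) * w j = ∑ j, π j * (w j * (1 - x j)) :=
    Finset.sum_congr rfl fun j _ => by ring
  refine ⟨fun j => sub_mul_self_nonneg (hπ j) (hx_mem j).2, hfeas,
    fun j => sub_mul_le_sub_mul_self_add (hfeas j) (hbound j) (hx_mem j).1, ?_⟩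
  rw [hobj, add_right_comm]

/-- from a feasible solution (π, q) of the dual (D) (with π ≤ π̄
componentwise, as π̄ dominates the optimal dual solution) and binary x,
the point (r, s, t) = (π − diag(π)x, π, q) is feasible for (D') and its (D')
objective value is at most the (D) objective value of (π, q). -/
theorem stmt_5 {m n : ℕ}
    (D : Matrix (Fin m) (Fin n) ℝ) (d : Fin m → ℝ)
    (v w y πbar x : Fin n → ℝ)
    (hv : 0 ≤ v) (hw : 0 ≤ w) (hx : ∀ j, x j = 0 ∨ x j = 1)
    (π : Fin n → ℝ) (q : Fin m → ℝ)
    (hπ : 0 ≤ π) (hq : 0 ≤ q)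
    (hfeas : ∀ j, y j ≤ π j + Matrix.vecMul q D j)
    (hbound : ∀ j, π j ≤ πbar j) :
    (0 ≤ fun j => π j - π j * x j) ∧
    (∀ j, y j ≤ π j + Matrix.vecMul q D j) ∧
    (∀ j, y j - πbar j * x j ≤ (π j - π j * x j) + Matrix.vecMul q D j) ∧
    q ⬝ᵥ d + (∑ j, (π j - π j * x j) * w j) + π ⬝ᵥ v
      ≤ q ⬝ᵥ d + π ⬝ᵥ v + ∑ j, π j * (w j * (1 - x j)) :=
  stmt_5_general D d v w y πbar x hx π q hπ hfeas hbound
end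

section
/- Under the Slater and nonnegativity assumptions of the conic setting, if (π, q) is feasible for the conic dual (KD): minimize qᵀd + πᵀv + πᵀW(1−x) subject to π + Dᵀq ≥ y, q ∈ K*, π ≥ 0, and x ∈ {0,1}^n, then (r, s, t) = (π − diag(π)x, π, q) is feasible for (KD'): minimize tᵀd + sᵀv + rᵀw subject to r + Dᵀt ≥ y − Π̄x, s + Dᵀt ≥ y, t ∈ K*, r, s ≥ 0, and its (KD') objective value is at most the (KD) objective value of (π, q). -/
/-!
The triple is feasible because `x ∈ {0,1}ⁿ` gives `0 ≤ x ≤ 1`: lowering `π` to `π - diag(π) x`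
costs at most `diag(π) x ≤ Π̄ x` in the covering constraint, and keeps the sign of `π`.
The two objectives in fact agree, since `(π - diag(π) x)ᵀ w = πᵀ W (1 - x)`.
-/

open Matrix

section LinearOrderedRing

variable {R : Type*} [CommRing R] [LinearOrder R] [IsStrictOrderedRing R]

lemma sub_le_sub_mul_add_of_le_add {y p pbar c x : R} (hy : y ≤ p + c) (hp : p ≤ pbar)
    (hx : 0 ≤ x) : y - pbar * x ≤ (p - p * x) + c := by
  have : p * x ≤ pbar * x := mul_le_mul_of_nonneg_right hp hx
  linarith

lemma sub_mul_nonneg_of_le_one {p x : R} (hp : 0 ≤ p) (hx : x ≤ 1) : 0 ≤ p - p * x := by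
  have : 0 ≤ p * (1 - x) := mul_nonneg hp (sub_nonneg.mpr hx)
  linarith

end LinearOrderedRing

theorem stmt_10_general {m n : ℕ} (K : Set (Fin m → ℝ))
    (D : Matrix (Fin m) (Fin n) ℝ) (d : Fin m → ℝ)
    (v w y πbar x : Fin n → ℝ)
    (hx : ∀ j, x j = 0 ∨ x j = 1)
    (π : Fin n → ℝ) (q : Fin m → ℝ)
    (hq : ∀ k ∈ K, 0 ≤ q ⬝ᵥ k) (hπ : 0 ≤ π)
    (hfeas : ∀ j, y j ≤ π j + Matrix.vecMul q D j)
    (hbound : ∀ j, π j ≤ πbar j) :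
    (∀ j, y j - πbar j * x j ≤ (π j - π j * x j) + Matrix.vecMul q D j) ∧
    (∀ j, y j ≤ π j + Matrix.vecMul q D j) ∧
    (∀ k ∈ K, 0 ≤ q ⬝ᵥ k) ∧
    (0 ≤ fun j => π j - π j * x j) ∧ 0 ≤ π ∧
    q ⬝ᵥ d + π ⬝ᵥ v + (∑ j, (π j - π j * x j) * w j)
      ≤ q ⬝ᵥ d + π ⬝ᵥ v + ∑ j, π j * (w j * (1 - x j)) := by
  have hx_nonneg (j : Fin n) : 0 ≤ x j := by rcases hx j with h | h <;> simp [h]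
  have hx_le_one (j : Fin n) : x j ≤ 1 := by rcases hx j with h | h <;> simp [h]
  have hobj : ∑ j, (π j - π j * x j) * w j = ∑ j, π j * (w j * (1 - x j)) :=
    Finset.sum_congr rfl fun j _ => by ring
  refine ⟨fun j => sub_le_sub_mul_add_of_le_add (hfeas j) (hbound j) (hx_nonneg j), hfeas, hq,
    fun j => sub_mul_nonneg_of_le_one (hπ j) (hx_le_one j), hπ, ?_⟩
  rw [hobj]

/-- if (π, q) is feasible for the conic dual (KD) with π ≤ π̄
componentwise and x is binary, then (r, s, t) = (π − diag(π)x, π, q) is feasible for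
(KD') and its (KD') objective is at most the (KD) objective of (π, q). -/
theorem stmt_10 {m n : ℕ} (K : Set (Fin m → ℝ))
    (hKclosed : IsClosed K) (hKconvex : Convex ℝ K)
    (hKcone : ∀ c : ℝ, 0 ≤ c → ∀ k ∈ K, c • k ∈ K)
    (D : Matrix (Fin m) (Fin n) ℝ) (d : Fin m → ℝ)
    (v w y πbar x : Fin n → ℝ)
    (hv : 0 ≤ v) (hw : 0 ≤ w) (hx : ∀ j, x j = 0 ∨ x j = 1)
    (π : Fin n → ℝ) (q : Fin m → ℝ)
    (hq : ∀ k ∈ K, 0 ≤ q ⬝ᵥ k) (hπ : 0 ≤ π)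
    (hfeas : ∀ j, y j ≤ π j + Matrix.vecMul q D j)
    (hbound : ∀ j, π j ≤ πbar j) :
    (∀ j, y j - πbar j * x j ≤ (π j - π j * x j) + Matrix.vecMul q D j) ∧
    (∀ j, y j ≤ π j + Matrix.vecMul q D j) ∧
    (∀ k ∈ K, 0 ≤ q ⬝ᵥ k) ∧
    (0 ≤ fun j => π j - π j * x j) ∧ 0 ≤ π ∧
    q ⬝ᵥ d + π ⬝ᵥ v + (∑ j, (π j - π j * x j) * w j)
      ≤ q ⬝ᵥ d + π ⬝ᵥ v + ∑ j, π j * (w j * (1 - x j)) :=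
  stmt_10_general K D d v w y πbar x hx π q hq hπ hfeas hbound
end
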